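/- arXiv:1805.10409 — 2 statements merged into one kernel-verified Lean document; each statement's English description precedes it below -/
import Mathlib

section
/- Suppose n ∈ ZG(e), i.e., k(n,e) ≡ 3 or 6 (mod 9) and p(n,e) ≡ 0 (mod 3). Then there is no group homomorphism φ : ℤ^n → G onto an abelian group G of order k(n,e) whose restriction to the Lee ball B^n(e) is a bijection; equivalently, no linear e-perfect Lee code exists in ℤ^n. -/
/-- The cardinality of the `n`-dimensional Lee ball of radius `e`. -/
def leeK (n e : ℕ) : ℕ := ∑ i ∈ Finset.range (min n e + 1), 2 ^ i * n.choose i * e.choose i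

/-- `p(n,e) = Σ_{i=0}^{e} 2 i² k(n−1, e−i)`. -/
def leeP (n e : ℕ) : ℕ := ∑ i ∈ Finset.range (e + 1), 2 * i ^ 2 * leeK (n - 1) (e - i)

/-!
Since `3 ∣ k(n,e) = |G|`, there is a surjective character `ψ : G → ℤ/3`. Its pullback `ψ ∘ φ` is
`x ↦ Σ aᵢ xᵢ mod 3`, and as `φ` maps `Bⁿ(e)` bijectively onto `G`,
`Σ_{g ∈ G} ψ(g)² = Σ_{b ∈ Bⁿ(e)} (Σ aᵢ bᵢ)² = p(n,e) Σ aᵢ² ≡ 0 (mod 3)`.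
But `ψ(g)² = 1` off `ker ψ`, so the left side is `|G| - |ker ψ| ≡ -|ker ψ| (mod 3)`.
Hence `3` divides `|ker ψ| = |G| / 3`, i.e. `9 ∣ k(n,e)`.
-/

open Finset

lemma leeK_eq_sum_range {n e N : ℕ} (hN : min n e < N) :
    leeK n e = ∑ i ∈ range N, 2 ^ i * n.choose i * e.choose i := by
  refine sum_subset (range_subset_range.2 hN) fun i _ hi => ?_
  rcases le_or_gt i n with hin | hin
  · rw [Nat.choose_eq_zero_of_lt (n := e) (by simp only [mem_range] at hi; omega), mul_zero]
  · rw [Nat.choose_eq_zero_of_lt hin, mul_zero, zero_mul]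

lemma sum_range_choose_eq_choose_add_one (n k : ℕ) :
    ∑ j ∈ range n, j.choose k = n.choose (k + 1) := by
  induction n with
  | zero => simp
  | succ n ih => rw [sum_range_succ, ih, Nat.choose_succ_succ', add_comm]

lemma leeK_succ_add_leeK (m e : ℕ) :
    leeK (m + 1) e + leeK m e = 2 * ∑ j ∈ range (e + 1), leeK m j := by
  have hsucc : leeK (m + 1) e
      = leeK m e + ∑ i ∈ range (e + 1), 2 ^ (i + 1) * m.choose i * e.choose (i + 1) := by
    rw [leeK_eq_sum_range (n := m + 1) (N := e + 2) (by omega),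
      leeK_eq_sum_range (n := m) (N := e + 2) (by omega), sum_range_succ' _ (e + 1),
      sum_range_succ' _ (e + 1)]
    simp only [Nat.choose_succ_succ', Nat.choose_zero_right, mul_add, add_mul, sum_add_distrib]
    ring
  have hrow : ∑ j ∈ range (e + 1), leeK m j
      = ∑ i ∈ range (e + 1), 2 ^ i * m.choose i * (e + 1).choose (i + 1) := by
    rw [sum_congr rfl fun j hj =>
      leeK_eq_sum_range (N := e + 1) (by simp only [mem_range] at hj; omega), sum_comm]
    simp only [← mul_sum, sum_range_choose_eq_choose_add_one]
  rw [hsucc, hrow, leeK_eq_sum_range (N := e + 1) (by omega), mul_sum, ← sum_add_distrib,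
    ← sum_add_distrib]
  refine sum_congr rfl fun i _ => ?_
  rw [Nat.choose_succ_succ']
  ring

noncomputable def leeBall (n e : ℕ) : Finset (Fin n → ℤ) :=
  (Fintype.piFinset fun _ => Icc (-(e : ℤ)) e).filter fun x => ∑ i, |x i| ≤ e

@[simp]
lemma mem_leeBall {n e : ℕ} {x : Fin n → ℤ} : x ∈ leeBall n e ↔ ∑ i, |x i| ≤ e := by
  refine ⟨fun h => (mem_filter.1 h).2, fun h => mem_filter.2 ⟨?_, h⟩⟩
  refine Fintype.mem_piFinset.2 fun i => mem_Icc.2 (abs_le.1 (le_trans ?_ h))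
  exact single_le_sum (fun j _ => abs_nonneg (x j)) (mem_univ i)

lemma coe_leeBall (n e : ℕ) :
    (leeBall n e : Set (Fin n → ℤ)) = {x : Fin n → ℤ | ∑ i, |x i| ≤ (e : ℤ)} := by
  ext; simp

lemma sum_leeBall_succ {M : Type*} [AddCommMonoid M] (m e : ℕ) (f : (Fin (m + 1) → ℤ) → M) :
    ∑ b ∈ leeBall (m + 1) e, f b
      = ∑ v ∈ Icc (-(e : ℤ)) e, ∑ y ∈ leeBall m (e - v.natAbs), f (Fin.cons v y) := by
  rw [sum_sigma']
  refine sum_nbij' (fun b => ⟨b 0, Fin.tail b⟩) (fun p => Fin.cons p.1 p.2) ?_ ?_ ?_ ?_ ?_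
  · intro b hb
    simp only [mem_leeBall, Fin.sum_univ_succ] at hb
    simp only [mem_sigma, mem_Icc, mem_leeBall, Fin.tail]
    have := abs_le.1 <|
      (le_add_of_nonneg_right (sum_nonneg fun i _ => abs_nonneg (b i.succ))).trans hb
    refine ⟨⟨by omega, by omega⟩, ?_⟩
    push_cast [show (b 0).natAbs ≤ e by omega]
    linarith
  · rintro ⟨v, y⟩ h
    simp only [mem_sigma, mem_Icc, mem_leeBall] at h
    simp only [mem_leeBall, Fin.sum_univ_succ, Fin.cons_zero, Fin.cons_succ]
    push_cast [show v.natAbs ≤ e by omega] at h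
    linarith
  · intro b _; exact Fin.cons_self_tail b
  · rintro ⟨v, y⟩ _; simp
  · intro b _; simp

lemma sum_Icc_natAbs_add {M : Type*} [AddCommMonoid M] (e : ℕ) (g : ℕ → M) :
    ∑ v ∈ Icc (-(e : ℤ)) e, g v.natAbs + g 0 = 2 • ∑ j ∈ range (e + 1), g j := by
  induction e with
  | zero => simp [two_nsmul]
  | succ e ih =>
    have hIcc : Icc (-((e + 1 : ℕ) : ℤ)) (e + 1 : ℕ)
        = cons (-(e + 1 : ℤ)) (cons (e + 1 : ℤ) (Icc (-(e : ℤ)) e) (by simp only [mem_Icc]; omega))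
          (by simp only [mem_cons, mem_Icc]; omega) := by
      ext; simp only [mem_cons, mem_Icc]; omega
    rw [hIcc, sum_cons, sum_cons, sum_range_succ, nsmul_add, ← ih]
    simp only [Int.natAbs_neg]
    have : (e + 1 : ℤ).natAbs = e + 1 := by omega
    rw [this, two_nsmul]
    abel

lemma card_leeBall (n e : ℕ) : #(leeBall n e) = leeK n e := by
  induction n generalizing e with
  | zero => simp [leeK, leeBall, Fintype.piFinset]
  | succ m ih =>
    have h := sum_Icc_natAbs_add e fun j => leeK m (e - j)
    have hrefl := sum_range_reflect (fun j => leeK m j) (e + 1)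
    simp only [Nat.add_sub_cancel, Nat.sub_zero, smul_eq_mul] at hrefl h
    have hrow := leeK_succ_add_leeK m e
    rw [hrefl] at h
    rw [card_eq_sum_ones, sum_leeBall_succ]
    simp only [← card_eq_sum_ones, ih]
    omega

lemma sum_leeBall_sq_apply_zero (m e : ℕ) :
    ∑ b ∈ leeBall (m + 1) e, b 0 ^ 2 = leeP (m + 1) e := by
  have h := sum_Icc_natAbs_add e fun j => ((j ^ 2 * leeK m (e - j) : ℕ) : ℤ)
  simp only [zero_pow two_ne_zero, zero_mul, Nat.cast_zero, add_zero] at h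
  rw [sum_leeBall_succ]
  simp only [Fin.cons_zero, sum_const, card_leeBall, nsmul_eq_mul]
  rw [leeP, Nat.add_sub_cancel]
  push_cast at h ⊢
  rw [nsmul_eq_mul, mul_sum] at h
  simp only [sq_abs] at h
  exact (sum_congr rfl fun _ _ => mul_comm _ _).trans (h.trans (sum_congr rfl fun _ _ => by ring))

lemma sum_leeBall_comp_of_involutive {M : Type*} [AddCommMonoid M] {n e : ℕ}
    (f : (Fin n → ℤ) → M) {σ : (Fin n → ℤ) → Fin n → ℤ} (hσ : Function.Involutive σ)
    (hσ_abs : ∀ x, ∑ i, |σ x i| = ∑ i, |x i|) :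
    ∑ b ∈ leeBall n e, f (σ b) = ∑ b ∈ leeBall n e, f b :=
  sum_nbij' σ σ (by simp [hσ_abs]) (by simp [hσ_abs]) (fun b _ => hσ b) (fun b _ => hσ b)
    (fun _ _ => rfl)

lemma sum_leeBall_mul_apply_of_ne {n e : ℕ} {i j : Fin n} (hij : i ≠ j) :
    ∑ b ∈ leeBall n e, b i * b j = 0 := by
  have hflip := sum_leeBall_comp_of_involutive (e := e) (fun b => b i * b j)
    (σ := fun b => Function.update b i (-b i)) (fun b => by simp)
    (fun b => sum_congr rfl fun k _ => by
      rcases eq_or_ne k i with rfl | hk <;> simp [Function.update_of_ne, *])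
  simp only [Function.update_self, Function.update_of_ne hij.symm, neg_mul, sum_neg_distrib]
    at hflip
  linarith

lemma sum_leeBall_sq_apply {n e : ℕ} (i : Fin n) :
    ∑ b ∈ leeBall n e, b i ^ 2 = leeP n e := by
  obtain ⟨m, rfl⟩ := Nat.exists_eq_add_one_of_ne_zero i.pos.ne'
  rw [← sum_leeBall_sq_apply_zero,
    ← sum_leeBall_comp_of_involutive _ (σ := fun b => b ∘ Equiv.swap 0 i)
      (fun b => by ext; simp) (fun b => Equiv.sum_comp (Equiv.swap 0 i) fun k => |b k|)]
  simp

lemma sum_leeBall_mul_apply {n e : ℕ} (i j : Fin n) :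
    ∑ b ∈ leeBall n e, b i * b j = if i = j then (leeP n e : ℤ) else 0 := by
  split_ifs with hij
  · simp only [hij, ← sq, sum_leeBall_sq_apply]
  · exact sum_leeBall_mul_apply_of_ne hij

theorem sum_leeBall_sq_sum_mul {R : Type*} [CommRing R] {n : ℕ} (e : ℕ) (a : Fin n → R) :
    ∑ b ∈ leeBall n e, (∑ i, (b i : R) * a i) ^ 2 = leeP n e * ∑ i, a i ^ 2 := by
  have hmoment (i j : Fin n) :
      ∑ b ∈ leeBall n e, ((b i : R) * b j) = if i = j then (leeP n e : R) else 0 := by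
    exact_mod_cast congrArg (Int.cast : ℤ → R) (sum_leeBall_mul_apply (e := e) i j)
  calc ∑ b ∈ leeBall n e, (∑ i, (b i : R) * a i) ^ 2
      = ∑ i, ∑ j, a i * a j * ∑ b ∈ leeBall n e, ((b i : R) * b j) := by
        simp_rw [sq, sum_mul_sum, mul_sum]
        rw [sum_comm]
        refine sum_congr rfl fun i _ => ?_
        rw [sum_comm]
        exact sum_congr rfl fun j _ => sum_congr rfl fun b _ => by ring
    _ = leeP n e * ∑ i, a i ^ 2 := by
        simp [hmoment, mul_sum, sq, mul_comm]

theorem exists_surjective_addMonoidHom_zmod {G : Type*} [AddCommGroup G] [Finite G] {p : ℕ}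
    [Fact p.Prime] (hp : p ∣ Nat.card G) : ∃ ψ : G →+ ZMod p, Function.Surjective ψ := by
  obtain ⟨g, hg⟩ := exists_prime_addOrderOf_dvd_card' p hp
  set H := (nsmulAddMonoidHom p : G →+ G).range
  obtain ⟨y, hy⟩ : ∃ y, y ∉ H := by
    by_contra! hall
    have hinj := Finite.injective_iff_surjective.2 fun y => hall y
    have hg0 : g = 0 := hinj (by simp [← hg, addOrderOf_nsmul_eq_zero])
    simp [hg0, (Fact.out : p.Prime).ne_one.symm] at hg
  have hy0 : (y : G ⧸ H) ≠ 0 := by simpa using hy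
  -- `have`, not `letI`: unfolding `zmodModule` (a `match` on `p`) makes instance search get stuck.
  have : Module (ZMod p) (G ⧸ H) := QuotientAddGroup.zmodModule fun x => ⟨x, rfl⟩
  obtain ⟨f, hf⟩ := Module.Projective.exists_dual_eq_one (ZMod p) hy0
  refine ⟨f.toAddMonoidHom.comp (QuotientAddGroup.mk' H), fun c => ⟨c.val • y, ?_⟩⟩
  simp [hf]

theorem sum_sq_add_card_ker {G : Type*} [AddCommGroup G] [Fintype G] (ψ : G →+ ZMod 3) :
    ∑ g, ψ g ^ 2 + Nat.card ψ.ker = Nat.card G := by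
  have hpoint : ∀ c : ZMod 3, c ^ 2 + (if c = 0 then 1 else 0) = 1 := by decide
  classical
  rw [Nat.card_eq_fintype_card, Nat.card_eq_fintype_card, Fintype.card_subtype, ← sum_boole,
    ← sum_add_distrib]
  simp only [AddMonoidHom.mem_ker, hpoint, sum_const, card_univ, nsmul_eq_mul, mul_one]

theorem card_eq_card_ker_mul_of_surjective {G H : Type*} [AddGroup G] [AddGroup H] (ψ : G →+ H)
    (hψ : Function.Surjective ψ) : Nat.card G = Nat.card ψ.ker * Nat.card H := by
  rw [← ψ.ker.card_mul_index, AddSubgroup.index_ker, AddMonoidHom.range_eq_top.2 hψ,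
    AddSubgroup.card_top]

theorem AddMonoidHom.apply_eq_sum_mul {R ι : Type*} [Ring R] [Fintype ι] [DecidableEq ι]
    (f : (ι → ℤ) →+ R) (x : ι → ℤ) : f x = ∑ i, (x i : R) * f (Pi.single i 1) := by
  conv_lhs => rw [← univ_sum_single x]
  refine (map_sum f _ _).trans (sum_congr rfl fun i _ => ?_)
  rw [← zsmul_eq_mul, ← map_zsmul, ← Pi.single_smul', smul_eq_mul, mul_one]

theorem no_linear_perfect_lee_code_of_ZhangGe_general (n e : ℕ)
    (hk : leeK n e % 9 = 3 ∨ leeK n e % 9 = 6) (hp : leeP n e % 3 = 0) :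
    ∀ (G : Type) [AddCommGroup G], Nat.card G = leeK n e →
      ∀ φ : (Fin n → ℤ) →+ G,
        ¬ Set.BijOn φ {x : Fin n → ℤ | ∑ i, |x i| ≤ (e : ℤ)} Set.univ := by
  intro G _ hG φ hφ
  have : Finite G := Nat.finite_of_card_ne_zero (by omega)
  have : Fintype G := Fintype.ofFinite G
  have : Fact (Nat.Prime 3) := ⟨Nat.prime_three⟩
  obtain ⟨ψ, hψ⟩ := exists_surjective_addMonoidHom_zmod (p := 3) (G := G) (by omega)
  rw [← coe_leeBall] at hφ
  have hsq : ∑ g, ψ g ^ 2 = 0 := calc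
    ∑ g, ψ g ^ 2 = ∑ b ∈ leeBall n e, ψ (φ b) ^ 2 :=
      (sum_nbij φ (fun _ _ => mem_univ _) hφ.injOn (by simpa using hφ.surjOn)
        fun _ _ => rfl).symm
    _ = ∑ b ∈ leeBall n e, (∑ i, (b i : ZMod 3) * ψ (φ (Pi.single i 1))) ^ 2 := by
      simp_rw [← AddMonoidHom.comp_apply, ← (ψ.comp φ).apply_eq_sum_mul]
    _ = 0 := by
      rw [sum_leeBall_sq_sum_mul, (ZMod.natCast_eq_zero_iff _ 3).2 (Nat.dvd_of_mod_eq_zero hp),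
        zero_mul]
  have hker := card_eq_card_ker_mul_of_surjective ψ hψ
  rw [Nat.card_zmod] at hker
  have h3 : 3 ∣ Nat.card ψ.ker := by
    have := sum_sq_add_card_ker ψ
    rwa [hsq, zero_add, hker, Nat.cast_mul, ZMod.natCast_self, mul_zero,
      ZMod.natCast_eq_zero_iff] at this
  omega

theorem no_linear_perfect_lee_code_of_ZhangGe (n e : ℕ) (hn : 0 < n) (he : 0 < e)
    (hk : leeK n e % 9 = 3 ∨ leeK n e % 9 = 6) (hp : leeP n e % 3 = 0) :
    ∀ (G : Type) [AddCommGroup G], Nat.card G = leeK n e →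
      ∀ φ : (Fin n → ℤ) →+ G,
        ¬ Set.BijOn φ {x : Fin n → ℤ | ∑ i, |x i| ≤ (e : ℤ)} Set.univ :=
  no_linear_perfect_lee_code_of_ZhangGe_general n e hk hp
end

section
/- Let n = 3^{m+1} + 3^m with m ≥ 2, h ≥ m+2, and j < 3^h with base-3 digits j = Σ_{i=0}^{h−1} j_i 3^i, j_i ∈ {0,1,2}. Then k(n−1, j) ≡ (1 − j_{m+1}) · (−1)^{j_0 + j_1 + ... + j_{m−1}} (mod 3). In particular k(n−1,j) mod 3 does not depend on the digit j_m. -/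
/-! Modulo a prime `p`, Lucas' theorem together with `c ^ p = c` makes the weighted sum
`∑ cⁱ C(N, i) C(e, i)` multiplicative over the base-`p` digits of `N` and `e`. For `p = 3` and
`c = 2 = -1`, the digits of `n - 1 = 4 * 3 ^ m - 1` are `2` (`m` times), `0`, `1`, and the
corresponding digit factors are `(-1) ^ d`, `1` and `1 - d`. -/

open Finset

section Semiring

variable {R : Type*} [CommSemiring R]

def leeSum (c : R) (N e : ℕ) : R :=
  ∑ i ∈ range (min N e + 1), c ^ i * N.choose i * e.choose i

theorem natCast_leeK (N e : ℕ) :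
    (leeK N e : R) = leeSum 2 N e := by
  simp [leeK, leeSum]

theorem leeSum_eq_sum_range (c : R) {N e M : ℕ}
    (hM : min N e < M) :
    leeSum c N e = ∑ i ∈ range M, c ^ i * N.choose i * e.choose i := by
  refine sum_subset (range_subset_range.mpr hM) fun i _ hi => ?_
  rcases le_total N e with hNe | hNe <;> simp_all [Nat.choose_eq_zero_of_lt]

theorem leeSum_zero_left (c : R) (e : ℕ) : leeSum c 0 e = 1 := by
  simp [leeSum]

end Semiring

theorem sum_range_mul_eq_sum_sum {M : Type*} [AddCommMonoid M] (f : ℕ → M) (p n : ℕ) :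
    ∑ i ∈ range (p * n), f i = ∑ q ∈ range n, ∑ s ∈ range p, f (p * q + s) := by
  induction n with
  | zero => simp
  | succ n ih => rw [Nat.mul_succ, sum_range_add, ih, sum_range_succ]

theorem sum_range_succ_mul_pow (b : ℕ) (d : ℕ → ℕ) (h : ℕ) :
    ∑ i ∈ range (h + 1), d i * b ^ i = b * ∑ i ∈ range h, d (i + 1) * b ^ i + d 0 := by
  rw [sum_range_succ', mul_sum]
  simp only [pow_succ, pow_zero, mul_one]
  congr 1
  exact sum_congr rfl fun i _ => by ring

theorem ZMod.natCast_choose_mul_add {p : ℕ} [Fact p.Prime] {a b r s : ℕ}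
    (hr : r < p) (hs : s < p) :
    ((p * a + r).choose (p * b + s) : ZMod p) = r.choose s * a.choose b := by
  have hp := (Fact.out : p.Prime).pos
  have lucas := (ZMod.intCast_eq_intCast_iff _ _ p).mpr
    (Choose.choose_modEq_choose_mod_mul_choose_div (n := p * a + r) (k := p * b + s) (p := p))
  push_cast at lucas
  rwa [Nat.mul_add_mod, Nat.mul_add_mod, Nat.mod_eq_of_lt hr, Nat.mod_eq_of_lt hs,
    Nat.mul_add_div hp, Nat.mul_add_div hp, Nat.div_eq_of_lt hr, Nat.div_eq_of_lt hs,
    add_zero, add_zero] at lucas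

theorem leeSum_mul_add {p : ℕ} [Fact p.Prime] (c : ZMod p) {a b r d : ℕ}
    (hr : r < p) (hd : d < p) :
    leeSum c (p * a + r) (p * b + d) = leeSum c r d * leeSum c a b := by
  rw [leeSum_eq_sum_range c (M := p * (a + 1)) (by rw [Nat.mul_succ]; omega),
    leeSum_eq_sum_range c (M := p) (by omega), leeSum_eq_sum_range c (M := a + 1) (by omega),
    sum_mul_sum, sum_comm, sum_range_mul_eq_sum_sum]
  refine sum_congr rfl fun q _ => sum_congr rfl fun s hs => ?_
  have hs : s < p := mem_range.mp hs
  rw [ZMod.natCast_choose_mul_add hr hs, ZMod.natCast_choose_mul_add hd hs, pow_add, pow_mul,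
    ZMod.pow_card]
  ring

theorem leeSum_one_left_of_lt {d : ℕ} (hd : d < 3) : leeSum (2 : ZMod 3) 1 d = 1 - d := by
  interval_cases d <;> decide

theorem leeSum_two_left_of_lt {d : ℕ} (hd : d < 3) : leeSum (2 : ZMod 3) 2 d = (-1) ^ d := by
  interval_cases d <;> decide

theorem leeSum_four_mul_three_pow_sub_one (k h : ℕ) (jd : ℕ → ℕ) (hjd : ∀ i < h, jd i < 3)
    (hk : k + 2 ≤ h) :
    leeSum (2 : ZMod 3) (4 * 3 ^ k - 1) (∑ i ∈ range h, jd i * 3 ^ i) =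
      (1 - jd (k + 1)) * (-1) ^ (∑ i ∈ range k, jd i) := by
  obtain ⟨h, rfl⟩ : ∃ h', h = h' + 1 := ⟨h - 1, by omega⟩
  rw [sum_range_succ_mul_pow]
  induction k generalizing h jd with
  | zero =>
    obtain ⟨h, rfl⟩ : ∃ h', h = h' + 1 := ⟨h - 1, by omega⟩
    rw [sum_range_succ_mul_pow, show 4 * 3 ^ 0 - 1 = 3 * (3 * 0 + 1) + 0 by norm_num,
      leeSum_mul_add _ (by norm_num) (hjd 0 (by omega)), leeSum_zero_left, one_mul,
      leeSum_mul_add _ (by norm_num) (hjd 1 (by omega)), leeSum_zero_left, mul_one,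
      leeSum_one_left_of_lt (hjd 1 (by omega))]
    simp
  | succ k ih =>
    have hsplit : 4 * 3 ^ (k + 1) - 1 = 3 * (4 * 3 ^ k - 1) + 2 := by
      have := Nat.one_le_pow k 3 (by norm_num)
      rw [pow_succ]; omega
    obtain ⟨h, rfl⟩ : ∃ h', h = h' + 1 := ⟨h - 1, by omega⟩
    rw [hsplit, leeSum_mul_add _ (by norm_num) (hjd 0 (by omega)),
      leeSum_two_left_of_lt (hjd 0 (by omega)), sum_range_succ_mul_pow,
      ih (fun i => jd (i + 1)) h (fun i hi => hjd (i + 1) (by omega)) (by omega),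
      sum_range_succ' _ k, pow_add]
    ring

theorem leeK_special_formula_general (m h j : ℕ) (hh : m + 2 ≤ h)
    (jd : ℕ → ℕ) (hjd : ∀ i < h, jd i < 3)
    (hrep : j = ∑ i ∈ Finset.range h, jd i * 3 ^ i)
    (n : ℕ) (hn : n = 3 ^ (m + 1) + 3 ^ m) :
    (leeK (n - 1) j : ℤ) ≡
      (1 - (jd (m + 1) : ℤ)) * (-1) ^ (∑ i ∈ Finset.range m, jd i) [ZMOD 3] := by
  have hN : n - 1 = 4 * 3 ^ m - 1 := by rw [hn, pow_succ]; ring_nf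
  refine (ZMod.intCast_eq_intCast_iff _ _ 3).mp ?_
  push_cast
  rw [natCast_leeK, hN, hrep, leeSum_four_mul_three_pow_sub_one m h jd hjd hh]

theorem leeK_special_formula (m h j : ℕ) (hm : 2 ≤ m) (hh : m + 2 ≤ h)
    (hj : j < 3 ^ h) (jd : ℕ → ℕ) (hjd : ∀ i < h, jd i < 3)
    (hrep : j = ∑ i ∈ Finset.range h, jd i * 3 ^ i)
    (n : ℕ) (hn : n = 3 ^ (m + 1) + 3 ^ m) :
    (leeK (n - 1) j : ℤ) ≡
      (1 - (jd (m + 1) : ℤ)) * (-1) ^ (∑ i ∈ Finset.range m, jd i) [ZMOD 3] :=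
  leeK_special_formula_general m h j hh jd hjd hrep n hn
end
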